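/- Let M be a finitely generated ℤ-graded R-module and let i be a nonnegative integer. Then there exists a positive integer C such that for all n and all integers j with |j| ≥ C·p^n, the degree-j graded piece of Tor_i^R(M, R/I^{[p^n]}) is zero. -/

import Mathlib

open Filter Complex

noncomputable section

/-- The Frobenius bracket power `I^{[q]}` of an ideal. -/
def bracketPow {R : Type*} [CommSemiring R] (I : Ideal R) (q : ℕ) : Ideal R :=
  Ideal.span ((fun x : R => x ^ q) '' (I : Set R))

/-- The map induced by an `R`-linear map on the quotients by `J • ⊤`. -/
def inducedQuot {R A B : Type*} [CommRing R] [AddCommGroup A] [Module R A]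
    [AddCommGroup B] [Module R B] (J : Ideal R) (f : A →ₗ[R] B) :
    (A ⧸ (J • ⊤ : Submodule R A)) →ₗ[R] B ⧸ (J • ⊤ : Submodule R B) :=
  Submodule.mapQ _ _ f (by
    rw [← Submodule.map_le_iff_le_comap, Submodule.map_smul'']
    exact Submodule.smul_mono le_rfl le_top)

/-- Given a graded free resolution `(F, ℱ, dF)` of a graded module, this proposition says
that the degree-`j` piece of `Tor_i(M, R/J) = H_i(F_• ⧸ J F_•)` vanishes: every
degree-`j` cycle at the `i`-th spot is a boundary. -/
def torPieceIsZero (k : Type*) {R : Type*} [Field k] [CommRing R] [Algebra k R]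
    (F : ℕ → Type) [∀ i, AddCommGroup (F i)] [∀ i, Module R (F i)]
    [∀ i, Module k (F i)] [∀ i, IsScalarTower k R (F i)]
    (ℱ : ∀ i, ℤ → Submodule k (F i))
    (dF : ∀ i, F (i + 1) →ₗ[R] F i)
    (J : Ideal R) (i : ℕ) (j : ℤ) : Prop :=
  match i with
  | 0 =>
      (ℱ 0 j).map (((J • ⊤ : Submodule R (F 0)).mkQ).restrictScalars k) ≤
        (LinearMap.range (inducedQuot J (dF 0))).restrictScalars k
  | (i' + 1) =>
      (ℱ (i' + 1) j).map (((J • ⊤ : Submodule R (F (i' + 1))).mkQ).restrictScalars k) ⊓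
          (LinearMap.ker (inducedQuot J (dF i'))).restrictScalars k ≤
        (LinearMap.range (inducedQuot J (dF (i' + 1)))).restrictScalars k

noncomputable section TorVanishingAux
namespace TorVanishingAux

open DirectSum

variable {k R : Type*} [Field k] [CommRing R] [Algebra k R]
variable (𝒜 : ℤ → Submodule k R) [GradedAlgebra 𝒜]

/-- Degree-`j` projection as an additive hom. -/
def dproj {N : Type*} [AddCommGroup N] [Module k N]
    (𝒩 : ℤ → Submodule k N) [DirectSum.Decomposition 𝒩] (j : ℤ) : N →+ N where
  toFun x := (DirectSum.decompose 𝒩 x j : N)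
  map_zero' := by simp
  map_add' x y := by simp

theorem dproj_apply {N : Type*} [AddCommGroup N] [Module k N]
    (𝒩 : ℤ → Submodule k N) [DirectSum.Decomposition 𝒩] (j : ℤ) (x : N) :
    dproj 𝒩 j x = (DirectSum.decompose 𝒩 x j : N) := rfl

theorem proj_smul {N : Type*} [AddCommGroup N] [Module R N] [Module k N] [IsScalarTower k R N]
    (𝒩 : ℤ → Submodule k N) [DirectSum.Decomposition 𝒩]
    (hc : ∀ (a b : ℤ), ∀ r ∈ 𝒜 a, ∀ x ∈ 𝒩 b, r • x ∈ 𝒩 (a + b))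
    (r : R) {b : ℤ} {y : N} (hy : y ∈ 𝒩 b) (j : ℤ) :
    (DirectSum.decompose 𝒩 (r • y) j : N) = (DirectSum.decompose 𝒜 r (j - b) : R) • y := by
  classical
  conv_lhs => rw [← DirectSum.sum_support_decompose 𝒜 r]
  rw [Finset.sum_smul, ← dproj_apply, map_sum]
  have : ∀ a ∈ (DirectSum.decompose 𝒜 r).support,
      dproj 𝒩 j ((DirectSum.decompose 𝒜 r a : R) • y)
        = if a = j - b then (DirectSum.decompose 𝒜 r (j - b) : R) • y else 0 := by
    intro a _
    have hmem : (DirectSum.decompose 𝒜 r a : R) • y ∈ 𝒩 (a + b) :=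
      hc a b _ (SetLike.coe_mem _) y hy
    by_cases h : a = j - b
    · subst h
      rw [dproj_apply, if_pos rfl]
      exact DirectSum.decompose_of_mem_same 𝒩 (by simpa using hmem)
    · rw [dproj_apply, if_neg h]
      exact DirectSum.decompose_of_mem_ne 𝒩 hmem (by omega)
  rw [Finset.sum_congr rfl this, Finset.sum_ite_eq' _ (j - b)]
  split_ifs with h
  · rfl
  · rw [DFinsupp.notMem_support_iff.mp h]
    simp



/-- components of elements of the ideal generated by degrees `≥ e` vanish below `e`. -/
theorem span_high_decompose_eq_zero (h𝒜neg : ∀ t : ℤ, t < 0 → 𝒜 t = ⊥) (e : ℤ) :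
    ∀ x ∈ Ideal.span {r : R | ∃ t : ℤ, e ≤ t ∧ r ∈ 𝒜 t},
      ∀ t' : ℤ, t' < e → (DirectSum.decompose 𝒜 x t' : R) = 0 := by
  classical
  intro x hx
  induction hx using Submodule.span_induction with
  | mem x h =>
      obtain ⟨t, ht, hxt⟩ := h
      intro t' ht'
      exact DirectSum.decompose_of_mem_ne 𝒜 hxt (by omega)
  | zero => intro t' _; simp
  | add x y hx hy ihx ihy =>
      intro t' ht'
      rw [DirectSum.decompose_add, DirectSum.add_apply, Submodule.coe_add, ihx t' ht',
        ihy t' ht', add_zero]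
  | smul r x hx ih =>
      intro t' ht'
      conv_lhs => rw [← DirectSum.sum_support_decompose 𝒜 x, Finset.smul_sum]
      rw [DirectSum.decompose_sum, DFinsupp.finset_sum_apply, AddSubmonoidClass.coe_finset_sum]
      refine Finset.sum_eq_zero fun b hb => ?_
      rw [proj_smul 𝒜 𝒜 (fun a b r hr x hx => by
            simpa [smul_eq_mul] using SetLike.mul_mem_graded hr hx) r (SetLike.coe_mem _) t']
      rcases le_or_gt e b with hbe | hbe
      · have : (DirectSum.decompose 𝒜 r (t' - b) : R) = 0 :=
          (Submodule.eq_bot_iff _).mp (h𝒜neg (t' - b) (by omega)) _ (SetLike.coe_mem _)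
        rw [this, zero_smul]
      · rw [ih b hbe, smul_zero]

theorem A_le_I_of_large (h𝒜neg : ∀ t : ℤ, t < 0 → 𝒜 t = ⊥)
    (I : Ideal R) (hI : Ideal.IsHomogeneous 𝒜 I) (hIfl : IsFiniteLength R (R ⧸ I)) :
    ∃ e0 : ℕ, ∀ t : ℤ, (e0 : ℤ) ≤ t → ∀ x ∈ 𝒜 t, x ∈ I := by
  classical
  have hart : IsArtinian R (R ⧸ I) :=
    (isFiniteLength_iff_isNoetherian_isArtinian.mp hIfl).2
  set K : ℕ → Ideal R := fun e => Ideal.span {r : R | ∃ t : ℤ, (e : ℤ) ≤ t ∧ r ∈ 𝒜 t} with hK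
  have hKmono : ∀ e e' : ℕ, e ≤ e' → K e' ≤ K e := by
    intro e e' h
    exact Ideal.span_mono (fun r ⟨t, ht, hrt⟩ => ⟨t, by omega, hrt⟩)
  set f : ℕ →o (Submodule R (R ⧸ I))ᵒᵈ :=
    ⟨fun e => Submodule.map I.mkQ (K e : Submodule R R),
     fun e e' h => Submodule.map_mono (hKmono e e' h)⟩ with hf
  obtain ⟨e0, he0⟩ := IsArtinian.monotone_stabilizes f
  refine ⟨e0, ?_⟩
  intro t ht x hx
  have htnn : 0 ≤ t := le_trans (Int.ofNat_nonneg e0) ht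
  have h1 : x ∈ K e0 := Ideal.subset_span ⟨t, ht, hx⟩
  have heq : Submodule.map I.mkQ (K e0 : Submodule R R)
      = Submodule.map I.mkQ (K (t.toNat + 1) : Submodule R R) :=
    he0 (t.toNat + 1) (by omega)
  have h2 : I.mkQ x ∈ Submodule.map I.mkQ (K (t.toNat + 1) : Submodule R R) := by
    rw [← heq]; exact ⟨x, h1, rfl⟩
  obtain ⟨y, hy, hxy⟩ := h2
  have hxyI : x - y ∈ I := by
    have : I.mkQ (x - y) = 0 := by rw [map_sub, hxy, sub_self]
    rwa [Submodule.mkQ_apply, Submodule.Quotient.mk_eq_zero] at this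
  have hdec := hI t hxyI
  have hyt : (DirectSum.decompose 𝒜 y t : R) = 0 :=
    TorVanishingAux.span_high_decompose_eq_zero 𝒜 h𝒜neg _ y hy t (by omega)
  rwa [DirectSum.decompose_sub, DirectSum.sub_apply, AddSubgroupClass.coe_sub,
    DirectSum.decompose_of_mem_same 𝒜 hx, hyt, sub_zero] at hdec

theorem module_bound (h𝒜neg : ∀ t : ℤ, t < 0 → 𝒜 t = ⊥)
    {N : Type*} [AddCommGroup N] [Module R N] [Module k N] [IsScalarTower k R N]
    [Module.Finite R N] (𝒩 : ℤ → Submodule k N) [DirectSum.Decomposition 𝒩]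
    (hc : ∀ (a b : ℤ), ∀ r ∈ 𝒜 a, ∀ x ∈ 𝒩 b, r • x ∈ 𝒩 (a + b)) :
    ∃ D : ℕ, (∀ j : ℤ, j < -(D : ℤ) → ∀ x ∈ 𝒩 j, x = 0) ∧
      ∀ (J : Ideal R) (B : ℤ), (∀ t : ℤ, B ≤ t → ∀ r ∈ 𝒜 t, r ∈ J) →
        ∀ j : ℤ, B + D ≤ j → ∀ x ∈ 𝒩 j, x ∈ (J • ⊤ : Submodule R N) := by
  classical
  obtain ⟨G, hG⟩ := Module.Finite.fg_top (R := R) (M := N)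
  set D : ℕ := G.sup fun g => (DirectSum.decompose 𝒩 g).support.sup fun b => b.natAbs with hD
  have hDb : ∀ g ∈ G, ∀ b ∈ (DirectSum.decompose 𝒩 g).support, b.natAbs ≤ D := by
    intro g hg b hb
    have h1 : ((DirectSum.decompose 𝒩 g).support.sup fun b => b.natAbs) ≤ D :=
      Finset.le_sup (f := fun g => (DirectSum.decompose 𝒩 g).support.sup fun b => b.natAbs) hg
    exact le_trans (Finset.le_sup hb) h1
  have hrep : ∀ (j : ℤ) (x : N), x ∈ 𝒩 j → ∃ f : N → R,
      x = ∑ g ∈ G, ∑ b ∈ (DirectSum.decompose 𝒩 g).support,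
        (DirectSum.decompose 𝒜 (f g) (j - b) : R) • (DirectSum.decompose 𝒩 g b : N) := by
    intro j x hx
    have hx' : x ∈ Submodule.span R (↑G : Set N) := by rw [hG]; trivial
    obtain ⟨f, -, hf⟩ := Submodule.mem_span_finset.mp hx'
    refine ⟨f, ?_⟩
    have hxp : x = (TorVanishingAux.dproj 𝒩 j) x := (DirectSum.decompose_of_mem_same 𝒩 hx).symm
    conv_lhs => rw [hxp, ← hf]
    rw [map_sum]
    refine Finset.sum_congr rfl fun g hg => ?_
    conv_lhs => rw [show f g • g = ∑ b ∈ (DirectSum.decompose 𝒩 g).support,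
        f g • (DirectSum.decompose 𝒩 g b : N) by
      rw [← Finset.smul_sum, DirectSum.sum_support_decompose 𝒩 g]]
    rw [map_sum]
    refine Finset.sum_congr rfl fun b _ => ?_
    exact TorVanishingAux.proj_smul 𝒜 𝒩 hc (f g) (SetLike.coe_mem _) j
  refine ⟨D, ?_, ?_⟩
  · intro j hj x hx
    obtain ⟨f, hf⟩ := hrep j x hx
    rw [hf]
    refine Finset.sum_eq_zero fun g hg => Finset.sum_eq_zero fun b hb => ?_
    have hb' : b.natAbs ≤ D := hDb g hg b hb
    have : (DirectSum.decompose 𝒜 (f g) (j - b) : R) = 0 :=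
      (Submodule.eq_bot_iff _).mp (h𝒜neg (j - b) (by omega)) _ (SetLike.coe_mem _)
    rw [this, zero_smul]
  · intro J B hJ j hj x hx
    obtain ⟨f, hf⟩ := hrep j x hx
    rw [hf]
    refine Submodule.sum_mem _ fun g hg => Submodule.sum_mem _ fun b hb => ?_
    have hb' : b.natAbs ≤ D := hDb g hg b hb
    refine Submodule.smul_mem_smul ?_ trivial
    exact hJ (j - b) (by omega) _ (SetLike.coe_mem _)

set_option maxHeartbeats 1000000 in
theorem A_le_bracketPow [Algebra.FiniteType k R]
    (h𝒜neg : ∀ t : ℤ, t < 0 → 𝒜 t = ⊥)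
    (h𝒜zero : ∀ x ∈ 𝒜 0, ∃ c : k, algebraMap k R c = x)
    (I : Ideal R) (hI : Ideal.IsHomogeneous 𝒜 I) (hIfl : IsFiniteLength R (R ⧸ I)) :
    ∃ E : ℕ, 1 ≤ E ∧ ∀ q : ℕ, 1 ≤ q → ∀ t : ℤ, ((E * q : ℕ) : ℤ) ≤ t →
      ∀ x ∈ 𝒜 t, x ∈ bracketPow I q := by
  classical
  obtain ⟨e0, he0⟩ := A_le_I_of_large 𝒜 h𝒜neg I hI hIfl
  set e1 : ℕ := e0 + 1 with he1
  haveI : IsNoetherianRing R := by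
    exact Algebra.FiniteType.isNoetherianRing k R
  set K1 : Ideal R := Ideal.span {r : R | ∃ t : ℤ, 1 ≤ t ∧ r ∈ 𝒜 t} with hK1
  obtain ⟨G, hG⟩ := (IsNoetherian.noetherian (K1 : Submodule R R))
  -- homogeneous components of generators
  set Q : Finset R := G.biUnion fun g =>
    (DirectSum.decompose 𝒜 g).support.image fun b => (DirectSum.decompose 𝒜 g b : R) with hQ
  have hQdeg : ∀ y ∈ Q, ∃ b : ℤ, 1 ≤ b ∧ y ∈ 𝒜 b := by
    intro y hy
    obtain ⟨g, hg, hy2⟩ := Finset.mem_biUnion.mp hy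
    obtain ⟨b, hb, rfl⟩ := Finset.mem_image.mp hy2
    refine ⟨b, ?_, SetLike.coe_mem _⟩
    by_contra hb1
    have hgK : g ∈ K1 := by rw [← hG]; exact Submodule.subset_span hg
    have := span_high_decompose_eq_zero 𝒜 h𝒜neg 1 g hgK b (by omega)
    exact (DFinsupp.mem_support_iff.mp hb) (by ext; simpa using this)
  -- degree function
  set d : R → ℤ := fun y => if h : ∃ b : ℤ, 1 ≤ b ∧ y ∈ 𝒜 b then h.choose else 1 with hd
  have hdQ : ∀ y ∈ Q, 1 ≤ d y ∧ y ∈ 𝒜 (d y) := by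
    intro y hy
    have h := hQdeg y hy
    rw [hd]; simp only [dif_pos h]
    exact ⟨h.choose_spec.1, h.choose_spec.2⟩
  set G1 : ℕ := Q.sup fun y => (d y).toNat with hG1
  have hdG1 : ∀ y ∈ Q, d y ≤ (G1 : ℤ) := by
    intro y hy
    have : (d y).toNat ≤ G1 := Finset.le_sup (f := fun y => (d y).toNat) hy
    omega
  set s : ℕ := Q.card with hs
  -- span Q = K1
  have hQspan : Ideal.span (↑Q : Set R) = K1 := by
    apply le_antisymm
    · rw [Ideal.span_le]
      intro y hy
      obtain ⟨b, hb, hyb⟩ := hQdeg y hy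
      exact Ideal.subset_span ⟨b, hb, hyb⟩
    · conv_lhs => rw [← hG]
      rw [Submodule.span_le]
      intro g hg
      have : g = ∑ b ∈ (DirectSum.decompose 𝒜 g).support, (DirectSum.decompose 𝒜 g b : R) :=
        (DirectSum.sum_support_decompose 𝒜 g).symm
      rw [this]
      refine Submodule.sum_mem _ fun b hb => Submodule.subset_span ?_
      exact Finset.mem_coe.mpr (Finset.mem_biUnion.mpr ⟨g, hg, Finset.mem_image_of_mem _ hb⟩)
  have hmul : ∀ (a b : ℤ), ∀ r ∈ 𝒜 a, ∀ x ∈ 𝒜 b, r • x ∈ 𝒜 (a + b) := by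
    intro a b r hr x hx
    simpa [smul_eq_mul] using SetLike.mul_mem_graded hr hx
  -- every homogeneous element of positive degree lies in the span of monomials of that degree
  have key : ∀ m : ℕ, ∀ x ∈ 𝒜 ((m : ℤ) + 1),
      x ∈ Submodule.span k ((Submonoid.closure (↑Q : Set R) : Set R) ∩ (𝒜 ((m : ℤ) + 1) : Set R)) := by
    intro m
    induction m using Nat.strong_induction_on with
    | _ m ih =>
      intro x hx
      have hxK : x ∈ Ideal.span (↑Q : Set R) := by
        rw [hQspan]; exact Ideal.subset_span ⟨(m : ℤ) + 1, by omega, hx⟩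
      obtain ⟨f, -, hf⟩ := Submodule.mem_span_finset.mp hxK
      have hxe : x = ∑ y ∈ Q,
          (DirectSum.decompose 𝒜 (f y) (((m : ℤ) + 1) - d y) : R) • y := by
        have hxp : x = (dproj 𝒜 ((m : ℤ) + 1)) x :=
          (DirectSum.decompose_of_mem_same 𝒜 hx).symm
        conv_lhs => rw [hxp, ← hf]
        rw [map_sum]
        refine Finset.sum_congr rfl fun y hy => ?_
        exact proj_smul 𝒜 𝒜 hmul (f y) ((hdQ y hy).2) _
      rw [hxe]
      refine Submodule.sum_mem _ fun y hy => ?_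
      have hcmem : (DirectSum.decompose 𝒜 (f y) (((m : ℤ) + 1) - d y) : R)
          ∈ 𝒜 (((m : ℤ) + 1) - d y) := SetLike.coe_mem _
      set c : R := (DirectSum.decompose 𝒜 (f y) (((m : ℤ) + 1) - d y) : R) with hcdef
      have hdy1 : 1 ≤ d y := (hdQ y hy).1
      rcases lt_trichotomy (((m : ℤ) + 1) - d y) 0 with hlt | heq | hgt
      · have : c = 0 := (Submodule.eq_bot_iff _).mp (h𝒜neg _ hlt) _ hcmem
        rw [this, zero_smul]; exact Submodule.zero_mem _
      · obtain ⟨κ, hκ⟩ := h𝒜zero c (by rw [← heq]; exact hcmem)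
        have hy𝒜 : y ∈ 𝒜 ((m : ℤ) + 1) := by
          have h2 := (hdQ y hy).2
          have hdy : d y = (m : ℤ) + 1 := by omega
          rwa [hdy] at h2
        have hcy : c • y = κ • y := by rw [← hκ, algebraMap_smul]
        rw [hcy]
        exact Submodule.smul_mem _ _
          (Submodule.subset_span ⟨Submonoid.subset_closure hy, hy𝒜⟩)
      · set m' : ℕ := (((m : ℤ) + 1) - d y - 1).toNat with hm'
        have hm'eq : ((m' : ℤ) + 1) = ((m : ℤ) + 1) - d y := by omega
        have hm'lt : m' < m := by omega
        have hcs : c ∈ Submodule.span k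
            ((Submonoid.closure (↑Q : Set R) : Set R) ∩ (𝒜 ((m' : ℤ) + 1) : Set R)) :=
          ih m' hm'lt c (by rw [hm'eq]; exact hcmem)
        have hcy : c • y = (LinearMap.mulRight k y) c := by
          simp [LinearMap.mulRight_apply, smul_eq_mul]
        rw [hcy]
        have hmem2 : (LinearMap.mulRight k y) c ∈ Submodule.map (LinearMap.mulRight k y)
            (Submodule.span k ((Submonoid.closure (↑Q : Set R) : Set R)
              ∩ (𝒜 ((m' : ℤ) + 1) : Set R))) := Submodule.mem_map_of_mem hcs
        rw [Submodule.map_span] at hmem2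
        refine Submodule.span_le.mpr ?_ hmem2
        rintro z ⟨w, ⟨hwcl, hw𝒜⟩, rfl⟩
        refine Submodule.subset_span ⟨?_, ?_⟩
        · exact Submonoid.mul_mem _ hwcl (Submonoid.subset_closure hy)
        · have hmm := SetLike.mul_mem_graded hw𝒜 ((hdQ y hy).2)
          have harith : ((m' : ℤ) + 1) + d y = (m : ℤ) + 1 := by omega
          rw [harith] at hmm
          simpa using hmm
  -- monomials of very high degree lie in the bracket power
  set E : ℕ := G1 * s * e1 + 1 with hE
  have hmono : ∀ z ∈ Submonoid.closure (↑Q : Set R), ∀ q : ℕ, 1 ≤ q → ∀ t : ℤ,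
      ((E * q : ℕ) : ℤ) ≤ t → z ∈ 𝒜 t → z ∈ bracketPow I q := by
    intro z hz q hq t ht hzt
    by_cases hz0 : z = 0
    · rw [hz0]; exact Ideal.zero_mem _
    obtain ⟨l, hlQ, hlprod⟩ := Submonoid.exists_list_of_mem_closure hz
    have hprod : ∀ l' : List R, (∀ y ∈ l', y ∈ (↑Q : Set R)) →
        l'.prod ∈ 𝒜 ((l'.map d).sum) := by
      intro l' hl'
      induction l' with
      | nil => simpa using SetLike.one_mem_graded 𝒜
      | cons a l2 ihl =>
          rw [List.prod_cons, List.map_cons, List.sum_cons]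
          exact SetLike.mul_mem_graded ((hdQ a (hl' a List.mem_cons_self)).2)
            (ihl fun y hy => hl' y (List.mem_cons_of_mem a hy))
    have hzdeg : z ∈ 𝒜 ((l.map d).sum) := hlprod ▸ hprod l hlQ
    have hteq : t = (l.map d).sum := DirectSum.degree_eq_of_mem_mem 𝒜 hzt hzdeg hz0
    have hsumle : (l.map d).sum ≤ (l.length : ℤ) * G1 := by
      have hbd : ∀ x ∈ l.map d, x ≤ (G1 : ℤ) := by
        intro x hx; obtain ⟨y, hy, rfl⟩ := List.mem_map.mp hx
        exact hdG1 y (hlQ y hy)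
      calc (l.map d).sum ≤ (l.map d).length • (G1 : ℤ) := List.sum_le_card_nsmul _ _ hbd
        _ = (l.length : ℤ) * G1 := by rw [List.length_map]; simp [nsmul_eq_mul]
    have hlen : s * e1 * q < l.length := by
      have h1 : ((G1 : ℤ) * (s * e1 * q)) + 1 ≤ (l.length : ℤ) * G1 := by
        have h2 : ((E * q : ℕ) : ℤ) = (G1 : ℤ) * (s * e1 * q) + q := by push_cast [hE]; ring
        omega
      by_contra hcon
      push_neg at hcon
      have h3 : (l.length : ℤ) ≤ (s : ℤ) * e1 * q := by exact_mod_cast hcon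
      nlinarith [mul_le_mul_of_nonneg_right h3 (Int.ofNat_nonneg G1)]
    set mlt : Multiset R := (l : Multiset R) with hmlt
    have hcard : Multiset.card mlt = l.length := by simp [hmlt]
    have hsub : mlt.toFinset ⊆ Q := by
      intro y hy
      exact hlQ y (by simpa [hmlt] using Multiset.mem_toFinset.mp hy)
    obtain ⟨y, hymem, hycount⟩ : ∃ y ∈ mlt.toFinset, e1 * q ≤ mlt.count y := by
      by_contra hcon
      push_neg at hcon
      have hsum : ∑ a ∈ mlt.toFinset, mlt.count a = Multiset.card mlt :=
        Multiset.toFinset_sum_count_eq mlt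
      have hle : ∑ a ∈ mlt.toFinset, mlt.count a ≤ mlt.toFinset.card * (e1 * q - 1) := by
        have := Finset.sum_le_card_nsmul mlt.toFinset (fun a => mlt.count a) (e1 * q - 1)
          (fun a ha => Nat.le_sub_one_of_lt (hcon a ha))
        simpa [smul_eq_mul] using this
      have hQcard : mlt.toFinset.card ≤ s := Finset.card_le_card hsub
      have h4 : mlt.toFinset.card * (e1 * q - 1) ≤ s * e1 * q :=
        le_trans (Nat.mul_le_mul hQcard (Nat.sub_le _ _)) (le_of_eq (mul_assoc s e1 q).symm)
      omega
    have hyQ : y ∈ Q := hsub hymem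
    obtain ⟨u, hu⟩ := Multiset.le_iff_exists_add.mp (Multiset.le_count_iff_replicate_le.mp hycount)
    have hzprod : z = y ^ (e1 * q) * u.prod := by
      rw [← hlprod, ← Multiset.prod_coe, ← hmlt, hu, Multiset.prod_add,
        Multiset.prod_replicate]
    have hyI : y ^ e1 ∈ I := by
      have hpm := SetLike.pow_mem_graded e1 ((hdQ y hyQ).2)
      refine he0 _ ?_ _ hpm
      have hdy1 : 1 ≤ d y := (hdQ y hyQ).1
      have hsm : (e1 : ℕ) • d y = (e1 : ℤ) * d y := by rw [nsmul_eq_mul]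
      have he1c : (e1 : ℤ) = (e0 : ℤ) + 1 := by rw [he1]; push_cast; ring
      rw [hsm, he1c]
      nlinarith
    rw [hzprod, pow_mul]
    exact Ideal.mul_mem_right _ _ (Ideal.subset_span ⟨y ^ e1, hyI, rfl⟩)
  -- assembly
  have hE1 : 1 ≤ E := by rw [hE]; exact Nat.le_add_left 1 _
  refine ⟨E, hE1, ?_⟩
  intro q hq t ht x hx
  have hEq1 : 1 ≤ E * q := le_trans hE1 (Nat.le_mul_of_pos_right E hq)
  have ht1 : 1 ≤ t := le_trans (by exact_mod_cast hEq1) ht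
  set m : ℕ := (t - 1).toNat with hm
  have hmt : (m : ℤ) + 1 = t := by omega
  have hxs := key m x (by rw [hmt]; exact hx)
  have hsle : Submodule.span k ((Submonoid.closure (↑Q : Set R) : Set R)
      ∩ (𝒜 ((m : ℤ) + 1) : Set R)) ≤ (bracketPow I q).restrictScalars k := by
    rw [Submodule.span_le]
    rintro z ⟨hzc, hz𝒜⟩
    exact hmono z hzc q hq t ht (by rw [← hmt]; exact hz𝒜)
  exact hsle hxs

end TorVanishingAux
end TorVanishingAux

theorem torPieceIsZero_of_le' {k : Type*} {R : Type*} [Field k] [CommRing R] [Algebra k R]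
    (F : ℕ → Type) [∀ i, AddCommGroup (F i)] [∀ i, Module R (F i)]
    [∀ i, Module k (F i)] [∀ i, IsScalarTower k R (F i)]
    (ℱ : ∀ i, ℤ → Submodule k (F i)) (dF : ∀ i, F (i + 1) →ₗ[R] F i)
    (J : Ideal R) (i : ℕ) (j : ℤ)
    (h : ∀ x ∈ ℱ i j, x ∈ (J • ⊤ : Submodule R (F i))) :
    torPieceIsZero k F ℱ dF J i j := by
  have himg : (ℱ i j).map (((J • ⊤ : Submodule R (F i)).mkQ).restrictScalars k) = ⊥ := by
    rw [Submodule.eq_bot_iff]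
    rintro x ⟨y, hy, rfl⟩
    simp only [LinearMap.restrictScalars_apply, Submodule.mkQ_apply]
    rw [Submodule.Quotient.mk_eq_zero]
    exact h y hy
  cases i with
  | zero =>
      rw [torPieceIsZero, himg]
      exact bot_le
  | succ i' =>
      rw [torPieceIsZero, himg]
      simp

/-- **Vanishing range of graded pieces of Tor against Frobenius powers.**
For a finitely generated `ℤ`-graded module `M` with a graded free resolution `F_•` and
any `i`, there is `C > 0` so that for all `n` and all `|j| ≥ C·pⁿ` the degree-`j` piece of
`Tor_i^R(M, R/I^{[pⁿ]})`, computed as the homology of `F_• ⧸ I^{[pⁿ]}F_•`, vanishes. -/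
theorem tor_graded_pieces_vanishing
    (k R M : Type) [Field k] [CommRing R] [Algebra k R] [Algebra.FiniteType k R]
    (p : ℕ) (hp : p.Prime) [CharP R p]
    (𝒜 : ℤ → Submodule k R) [GradedAlgebra 𝒜]
    (h𝒜neg : ∀ t : ℤ, t < 0 → 𝒜 t = ⊥)
    (h𝒜zero : ∀ x ∈ 𝒜 0, ∃ c : k, algebraMap k R c = x)
    (I : Ideal R) (hI : Ideal.IsHomogeneous 𝒜 I) (hIfl : IsFiniteLength R (R ⧸ I))
    [AddCommGroup M] [Module R M] [Module k M] [IsScalarTower k R M] [Module.Finite R M]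
    (ℳ : ℤ → Submodule k M) [DirectSum.Decomposition ℳ]
    (hℳ : ∀ (a b : ℤ), ∀ r ∈ 𝒜 a, ∀ x ∈ ℳ b, r • x ∈ ℳ (a + b))
    -- a graded free resolution `F_• → M`
    (F : ℕ → Type) [∀ i, AddCommGroup (F i)] [∀ i, Module R (F i)]
    [∀ i, Module k (F i)] [∀ i, IsScalarTower k R (F i)]
    [∀ i, Module.Free R (F i)] [∀ i, Module.Finite R (F i)]
    (ℱ : ∀ i, ℤ → Submodule k (F i)) [∀ i, DirectSum.Decomposition (ℱ i)]
    (hℱ : ∀ (i : ℕ) (a b : ℤ), ∀ r ∈ 𝒜 a, ∀ x ∈ ℱ i b, r • x ∈ ℱ i (a + b))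
    (dF : ∀ i, F (i + 1) →ₗ[R] F i) (ε : F 0 →ₗ[R] M)
    (hdFdeg : ∀ (i : ℕ) (t : ℤ), ∀ x ∈ ℱ (i + 1) t, dF i x ∈ ℱ i t)
    (hεdeg : ∀ t : ℤ, ∀ x ∈ ℱ 0 t, ε x ∈ ℳ t)
    (hεsurj : Function.Surjective ε)
    (hex0 : LinearMap.range (dF 0) = LinearMap.ker ε)
    (hex : ∀ i : ℕ, LinearMap.range (dF (i + 1)) = LinearMap.ker (dF i))
    (i : ℕ) :
    ∃ C : ℕ, 0 < C ∧ ∀ (n : ℕ) (j : ℤ),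
      (C * p ^ n : ℕ) ≤ j.natAbs →
      torPieceIsZero k F ℱ dF (bracketPow I (p ^ n)) i j := by
  classical
  obtain ⟨E, hE1, hE⟩ := TorVanishingAux.A_le_bracketPow 𝒜 h𝒜neg h𝒜zero I hI hIfl
  obtain ⟨D, hDneg, hDpos⟩ := TorVanishingAux.module_bound 𝒜 h𝒜neg (ℱ i) (hℱ i)
  refine ⟨E + D + 1, by omega, ?_⟩
  intro n j hj
  have hq : 1 ≤ p ^ n := Nat.one_le_pow n p hp.pos
  apply torPieceIsZero_of_le'
  intro x hx
  rcases le_or_gt 0 j with hj0 | hj0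
  · have h1 : (((E + D + 1) * p ^ n : ℕ) : ℤ) ≤ j := by
      have h2 : ((j.natAbs : ℕ) : ℤ) = j := Int.natAbs_of_nonneg hj0
      calc (((E + D + 1) * p ^ n : ℕ) : ℤ) ≤ ((j.natAbs : ℕ) : ℤ) := by exact_mod_cast hj
        _ = j := h2
    have h3 : (D : ℤ) ≤ (D : ℤ) * ((p ^ n : ℕ) : ℤ) := by
      have : (1 : ℤ) ≤ ((p ^ n : ℕ) : ℤ) := by exact_mod_cast hq
      nlinarith [Int.ofNat_nonneg D]
    have h4 : (((E + D + 1) * p ^ n : ℕ) : ℤ)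
        = (E * p ^ n : ℕ) + (D : ℤ) * (p ^ n : ℕ) + (p ^ n : ℕ) := by push_cast; ring
    refine hDpos (bracketPow I (p ^ n)) ((E * p ^ n : ℕ) : ℤ) ?_ j ?_ x hx
    · intro t htq r hr
      exact hE (p ^ n) hq t htq r hr
    · have : (1 : ℤ) ≤ (p ^ n : ℕ) := by exact_mod_cast hq
      linarith
  · have hx0 : x = 0 := by
      refine hDneg j ?_ x hx
      have hCq : E + D + 1 ≤ (E + D + 1) * p ^ n := Nat.le_mul_of_pos_right _ hq
      have h2 : E + D + 1 ≤ j.natAbs := le_trans hCq hj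
      omega
    rw [hx0]
    exact Submodule.zero_mem _

end
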